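/- Let v_L > 0, y_L < 0, y_L² > 4v_L, R_L = √(y_L²−4v_L), and let v > v_L with y = v(y_L + R_L)/(2v_L) + (y_L − R_L)/2 (a point on the 2-shock curve S₂ through (v_L, y_L)) satisfying y² > 4v. Then the 2-shock speed s₂ = (−y_L + R_L)/(2v·v_L) satisfies the Lax admissibility inequalities λ₂(v_L, y_L) > s₂ > λ₂(v, y), where λ₂(v,y) = (−y + √(y²−4v))/(2v²). -/

import Mathlib

/-- Second characteristic speed. -/
noncomputable def lam2 (v y : ℝ) : ℝ := (-y + Real.sqrt (y ^ 2 - 4 * v)) / (2 * v ^ 2)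

/-!
Write the left state through the two roots `p < q` of `t² + y_L t + v_L`, so that
`v_L = p q`, `y_L = -(p + q)` and `R_L = q - p`. On `S₂` the state is then
`(v, -(v/q + q))`, whose roots are `v/q` and `q`, and the shock speed is `1 / (v p)`.
Since `λ₂(a b, -(a + b)) = max a b / (a b)²`, both Lax inequalities reduce to
`p q < v` together with `0 < p < q`.
-/

theorem lam2_mul_neg_add (a b : ℝ) : lam2 (a * b) (-(a + b)) = max a b / (a * b) ^ 2 := by
  have hdisc : (-(a + b)) ^ 2 - 4 * (a * b) = (a - b) ^ 2 := by ring
  have hmax : a + b + |a - b| = 2 * max a b := by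
    rcases le_total a b with hab | hba
    · rw [max_eq_right hab, abs_of_nonpos (sub_nonpos.2 hab)]; ring
    · rw [max_eq_left hba, abs_of_nonneg (sub_nonneg.2 hba)]; ring
  rw [lam2, hdisc, Real.sqrt_sq_eq_abs, neg_neg, hmax, mul_div_mul_left _ _ two_ne_zero]

section LaxInequalities

variable {p q v : ℝ}

theorem one_div_mul_lt_lam2_mul_neg_add (hp : 0 < p) (hpq : p < q) (hv : p * q < v) :
    1 / (v * p) < lam2 (p * q) (-(p + q)) := by
  have hq : 0 < q := hp.trans hpq
  have hv0 : 0 < v := (mul_pos hp hq).trans hv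
  rw [lam2_mul_neg_add, max_eq_right hpq.le, div_lt_div_iff₀ (by positivity) (by positivity)]
  nlinarith [mul_pos hp hq]

theorem lam2_neg_div_add_lt_one_div_mul (hp : 0 < p) (hpq : p < q) (hv : p * q < v) :
    lam2 v (-(v / q + q)) < 1 / (v * p) := by
  have hq : 0 < q := hp.trans hpq
  have hv0 : 0 < v := (mul_pos hp hq).trans hv
  have hlam : lam2 v (-(v / q + q)) = max (v / q) q / v ^ 2 := by
    simpa only [div_mul_cancel₀ v hq.ne'] using lam2_mul_neg_add (v / q) q
  have hspeed : 1 / (v * p) * v ^ 2 = v / p := by field_simp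
  rw [hlam, div_lt_iff₀ (by positivity), hspeed]
  exact max_lt (div_lt_div_of_pos_left hv0 hp hpq) ((lt_div_iff₀ hp).2 ((mul_comm q p).trans_lt hv))

end LaxInequalities

theorem exists_roots_of_sqrt_discrim {b c R : ℝ} (hc : 0 < c) (hb : b < 0) (hdisc : 4 * c < b ^ 2)
    (hR : R = Real.sqrt (b ^ 2 - 4 * c)) :
    ∃ p q : ℝ, 0 < p ∧ p < q ∧ c = p * q ∧ b = -(p + q) ∧ R = q - p := by
  have hR_pos : 0 < R := hR ▸ Real.sqrt_pos.2 (by linarith)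
  have hR_sq : R ^ 2 = b ^ 2 - 4 * c := hR ▸ Real.sq_sqrt (by linarith)
  have hR_lt : R < -b := by
    rw [hR, ← abs_of_neg hb, ← Real.sqrt_sq_eq_abs]
    exact Real.sqrt_lt_sqrt (by linarith) (by linarith)
  refine ⟨(-b - R) / 2, (-b + R) / 2, by linarith, by linarith, ?_, by ring, by ring⟩
  linear_combination hR_sq / 4

theorem stmt9_general (vL yL v y RL : ℝ)
    (hvL : 0 < vL) (hyL : yL < 0) (hL : yL ^ 2 > 4 * vL)
    (hRL : RL = Real.sqrt (yL ^ 2 - 4 * vL))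
    (hv : vL < v)
    (hy : y = v * (yL + RL) / (2 * vL) + (yL - RL) / 2) :
    lam2 vL yL > (-yL + RL) / (2 * v * vL) ∧
    (-yL + RL) / (2 * v * vL) > lam2 v y := by
  obtain ⟨p, q, hp, hpq, rfl, rfl, rfl⟩ := exists_roots_of_sqrt_discrim hvL hyL hL hRL
  have hq : 0 < q := hp.trans hpq
  have hy_roots : y = -(v / q + q) := by
    rw [hy]
    field_simp
    ring
  have hspeed : (-(-(p + q)) + (q - p)) / (2 * v * (p * q)) = 1 / (v * p) := by
    have hv0 : 0 < v := (mul_pos hp hq).trans hv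
    field_simp
    ring
  rw [hy_roots, hspeed]
  exact ⟨one_div_mul_lt_lam2_mul_neg_add hp hpq hv, lam2_neg_div_add_lt_one_div_mul hp hpq hv⟩

theorem stmt9 (vL yL v y RL : ℝ)
    (hvL : 0 < vL) (hyL : yL < 0) (hL : yL ^ 2 > 4 * vL)
    (hRL : RL = Real.sqrt (yL ^ 2 - 4 * vL))
    (hv : vL < v)
    (hy : y = v * (yL + RL) / (2 * vL) + (yL - RL) / 2)
    (hhyp : y ^ 2 > 4 * v) :
    lam2 vL yL > (-yL + RL) / (2 * v * vL) ∧
    (-yL + RL) / (2 * v * vL) > lam2 v y :=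
  stmt9_general vL yL v y RL hvL hyL hL hRL hv hy
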